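/- Suppose α, β ∈ Φ satisfy (w^jα, β) ∈ {0, 1, −1} for all j. Then, as an identity in k: 1 − ⟨β,α⟩_w = Σ_{j ∈ I_{α,β}(−1)} ε_w(w^jα, β), where I_{α,β}(−1) := {j ∈ {0, 1, ..., d−1} | (w^jα, β) = −1}. -/

import Mathlib

noncomputable section

/-- The subgroup `(1-w)Λ`. -/
def coinvSub {Λ : Type*} [AddCommGroup Λ] (w : AddAut Λ) : AddSubgroup Λ :=
  AddSubgroup.closure {y | ∃ x : Λ, y = x - w x}

/-- The pairing `ε_w(α,β) = ∏_{j=1}^{d-1} (1 - ζ^{-j})^{(w^jα,β)}`. -/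
def epsw {k : Type*} [Field k] {Λ : Type*} [AddCommGroup Λ] (d : ℕ) (ζ : k)
    (B : Λ →+ Λ →+ ℤ) (w : AddAut Λ) (α β : Λ) : k :=
  ∏ j ∈ Finset.Ico 1 d, (1 - ζ ^ (-(j : ℤ))) ^ (B ((j • w) α) β)

/-! Write `a j = (w^j α, β) ∈ {0, ±1}`. Ellipticity makes `∑_j w^j α` a torsion vector, so
`∑_j a j = 0` and `S = {a = 1}`, `T = {a = -1}` have the same size. With `v l = ζ^l` the left side
is `1 - ∏_T v / ∏_S v`, while `ε_w(w^jα, β) = ∏_S (1 - v_j / v_s) / ∏_{T∖j} (1 - v_j / v_t)`.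
The identity is then Lagrange interpolation, on the nodes `v_T` and evaluated at `0`, of
`∏_S (X - v_s) - ∏_T (X - v_t)`, a polynomial of degree `< #T`. -/

open Finset

open Polynomial in
theorem prod_sub_prod_eq_sum_mul_prod_div {K ι : Type*} [Field K] [DecidableEq ι]
    {S T : Finset ι} {v : ι → K} (hv : Set.InjOn v T) (hST : #S = #T) :
    ∏ s ∈ S, v s - ∏ t ∈ T, v t =
      ∑ t ∈ T, (∏ s ∈ S, (v s - v t)) * ∏ t' ∈ T.erase t, v t' / (v t' - v t) := by
  set F : K[X] := ∏ s ∈ S, (X - C (v s))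
  set G : K[X] := ∏ t ∈ T, (X - C (v t))
  have hF : F.Monic := monic_prod_of_monic _ _ fun s _ => monic_X_sub_C _
  have hG : G.Monic := monic_prod_of_monic _ _ fun t _ => monic_X_sub_C _
  have hdeg : (F - G).degree < #T := by
    have hFdeg : F.degree = #T := by simp [F, degree_prod, hST]
    refine hFdeg ▸ degree_sub_lt_left (by simp [F, G, degree_prod, hST]) hF.ne_zero ?_
    rw [hF.leadingCoeff, hG.leadingCoeff]
  have h := congrArg (eval 0) (Lagrange.eq_interpolate hv hdeg)
  simp only [Lagrange.interpolate_apply, Lagrange.basis, Lagrange.basisDivisor, F, G,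
    eval_finsetSum, eval_mul, eval_C, eval_sub, eval_prod, eval_X, zero_sub, prod_neg, hST,
    ← mul_sub] at h
  refine mul_left_cancel₀ (pow_ne_zero #T (neg_ne_zero.2 one_ne_zero)) (h.trans ?_)
  rw [mul_sum]
  refine sum_congr rfl fun t ht => ?_
  rw [prod_eq_zero ht (sub_self _), sub_zero, ← hST, ← mul_assoc, ← prod_neg]
  congr 1
  · simp only [neg_sub]
  · exact prod_congr rfl fun t' _ => by rw [← neg_sub, inv_neg, div_eq_mul_inv]; ring

theorem one_sub_prod_div_prod_eq_sum_prod_div {K ι : Type*} [Field K] [DecidableEq ι]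
    {S T : Finset ι} {v : ι → K} (hS : ∀ s ∈ S, v s ≠ 0) (hT : ∀ t ∈ T, v t ≠ 0)
    (hv : Set.InjOn v T) (hST : #S = #T) :
    1 - (∏ t ∈ T, v t) / ∏ s ∈ S, v s =
      ∑ t ∈ T, (∏ s ∈ S, (1 - v t / v s)) / ∏ t' ∈ T.erase t, (1 - v t / v t') := by
  rw [one_sub_div (prod_ne_zero_iff.2 hS), prod_sub_prod_eq_sum_mul_prod_div hv hST, sum_div]
  refine sum_congr rfl fun t ht => ?_
  rw [prod_congr rfl fun s hs => one_sub_div (hS s hs),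
    prod_congr rfl fun t' ht' => one_sub_div (hT t' (mem_of_mem_erase ht')),
    prod_div_distrib, prod_div_distrib, prod_div_distrib, div_div_eq_mul_div]
  ring

theorem zpow_sum₀ {G₀ ι : Type*} [CommGroupWithZero G₀] {x : G₀} (hx : x ≠ 0) (s : Finset ι)
    (f : ι → ℤ) : x ^ (∑ i ∈ s, f i) = ∏ i ∈ s, x ^ f i := by
  classical
  induction s using Finset.induction_on with
  | empty => simp
  | insert i s hi ih => rw [sum_insert hi, prod_insert hi, zpow_add₀ hx, ih]

section SignVector

variable {ι : Type*} {a : ι → ℤ}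

theorem prod_zpow_eq_prod_filter_div {M : Type*} [DivisionCommMonoid M]
    (ha : ∀ i, a i = 0 ∨ a i = 1 ∨ a i = -1) (s : Finset ι) (x : ι → M) :
    ∏ i ∈ s, x i ^ a i = (∏ i ∈ s with a i = 1, x i) / ∏ i ∈ s with a i = -1, x i := by
  rw [prod_filter, prod_filter, ← prod_div_distrib]
  refine prod_congr rfl fun i _ => ?_
  rcases ha i with h | h | h <;> simp [h]

theorem sum_eq_card_filter_sub_card_filter (ha : ∀ i, a i = 0 ∨ a i = 1 ∨ a i = -1)
    (s : Finset ι) : ∑ i ∈ s, a i = #{i ∈ s | a i = 1} - #{i ∈ s | a i = -1} := by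
  rw [natCast_card_filter, natCast_card_filter, ← sum_sub_distrib]
  refine sum_congr rfl fun i _ => ?_
  rcases ha i with h | h | h <;> simp [h]

end SignVector

theorem Function.Periodic.prod_Ico_one_add {M : Type*} [CommMonoid M] {f : ℕ → M} {d : ℕ}
    (hf : Function.Periodic f d) {j : ℕ} (hj : j < d) :
    ∏ i ∈ Ico 1 d, f (i + j) = ∏ l ∈ (range d).erase j, f l := by
  refine prod_nbij' (fun i => if i + j < d then i + j else i + j - d)
    (fun l => if j < l then l - j else l + d - j) ?_ ?_ ?_ ?_ fun i _ => by
      split_ifs with h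
      · rfl
      · rw [← hf (i + j - d), Nat.sub_add_cancel (not_lt.1 h)]
  all_goals
    intro i hi
    simp only [mem_Ico, mem_erase, mem_range] at hi ⊢
    split_ifs <;> omega

theorem IsPrimitiveRoot.one_sub_zpow_sum_eq_sum_prod {K : Type*} [Field K] {d : ℕ} (hd : 0 < d)
    {ζ : K} (hζ : IsPrimitiveRoot ζ d) {a : ℕ → ℤ} (ha : ∀ i, a i = 0 ∨ a i = 1 ∨ a i = -1)
    (hper : Function.Periodic a d) (hsum : ∑ i ∈ range d, a i = 0) :
    1 - ζ ^ (∑ j ∈ Ico 1 d, (j : ℤ) * a (d - j)) =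
      ∑ j ∈ range d with a j = -1, ∏ i ∈ Ico 1 d, (1 - ζ ^ (-(i : ℤ))) ^ a (i + j) := by
  set S := {i ∈ range d | a i = 1}
  set T := {i ∈ range d | a i = -1}
  have hζ0 : ζ ≠ 0 := hζ.ne_zero hd.ne'
  have hST : #S = #T := by
    have := (sum_eq_card_filter_sub_card_filter ha (range d)).symm.trans hsum
    exact_mod_cast sub_eq_zero.1 this
  have hinj : Set.InjOn (ζ ^ ·) T := fun i hi j hj =>
    hζ.pow_inj (mem_range.1 (mem_filter.1 hi).1) (mem_range.1 (mem_filter.1 hj).1)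
  have hlhs : ζ ^ (∑ j ∈ Ico 1 d, (j : ℤ) * a (d - j)) = (∏ t ∈ T, ζ ^ t) / ∏ s ∈ S, ζ ^ s := by
    calc ζ ^ (∑ j ∈ Ico 1 d, (j : ℤ) * a (d - j))
        = ∏ j ∈ Ico 1 d, ((ζ ^ (d - j))⁻¹) ^ a (d - j) := by
          rw [zpow_sum₀ hζ0]
          refine prod_congr rfl fun j hj => ?_
          have hinv : ζ ^ j = (ζ ^ (d - j))⁻¹ := eq_inv_of_mul_eq_one_left <| by
            rw [← pow_add, Nat.add_sub_cancel' (mem_Ico.1 hj).2.le, hζ.pow_eq_one]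
          rw [zpow_mul, zpow_natCast, hinv]
      _ = ∏ i ∈ range d, ((ζ ^ i)⁻¹) ^ a i := by
          rw [prod_Ico_reflect (fun i => (ζ ^ i)⁻¹ ^ a i) 1 d.le_succ, Nat.add_sub_cancel_left,
            Nat.add_sub_cancel, range_eq_Ico, prod_eq_prod_Ico_succ_bot hd]
          simp
      _ = (∏ t ∈ T, ζ ^ t) / ∏ s ∈ S, ζ ^ s := by
          rw [prod_zpow_eq_prod_filter_div ha, prod_inv_distrib, prod_inv_distrib, inv_div_inv]
  have heps : ∀ j ∈ T, ∏ i ∈ Ico 1 d, (1 - ζ ^ (-(i : ℤ))) ^ a (i + j) =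
      (∏ s ∈ S, (1 - ζ ^ j / ζ ^ s)) / ∏ t ∈ T.erase j, (1 - ζ ^ j / ζ ^ t) := by
    intro j hj
    obtain ⟨hjd, hja⟩ := mem_filter.1 hj
    have hper' : Function.Periodic (fun l => (1 - ζ ^ j / ζ ^ l) ^ a l) d := fun l => by
      simp only [pow_add, hζ.pow_eq_one, mul_one, hper l]
    have hjS : j ∉ S := fun h => by have := (mem_filter.1 h).2; omega
    calc ∏ i ∈ Ico 1 d, (1 - ζ ^ (-(i : ℤ))) ^ a (i + j)
        = ∏ i ∈ Ico 1 d, (1 - ζ ^ j / ζ ^ (i + j)) ^ a (i + j) := by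
          refine prod_congr rfl fun i _ => ?_
          rw [pow_add, div_mul_cancel_right₀ (pow_ne_zero j hζ0), zpow_neg, zpow_natCast]
      _ = ∏ l ∈ (range d).erase j, (1 - ζ ^ j / ζ ^ l) ^ a l :=
          hper'.prod_Ico_one_add (mem_range.1 hjd)
      _ = (∏ s ∈ S, (1 - ζ ^ j / ζ ^ s)) / ∏ t ∈ T.erase j, (1 - ζ ^ j / ζ ^ t) := by
          rw [prod_zpow_eq_prod_filter_div ha, filter_erase, filter_erase,
            erase_eq_of_notMem hjS]
  rw [hlhs, sum_congr rfl heps]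
  exact one_sub_prod_div_prod_eq_sum_prod_div (fun _ _ => pow_ne_zero _ hζ0)
    (fun _ _ => pow_ne_zero _ hζ0) hinj hST

section Lattice

variable {Λ : Type*} [AddCommGroup Λ] {w : AddAut Λ} {d : ℕ}

theorem AddAut.periodic_nsmul_apply (hw : d • w = 0) (x : Λ) :
    Function.Periodic (fun j : ℕ => (j • w) x) d := fun j => by
  simp only [add_nsmul, hw, add_zero]

theorem AddAut.sum_range_succ_nsmul_apply (hw : d • w = 0) (x : Λ) :
    ∑ j ∈ range d, ((j + 1) • w) x = ∑ j ∈ range d, (j • w) x := by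
  have h := (sum_range_succ' (fun j => (j • w) x) d).symm.trans (sum_range_succ _ d)
  rwa [hw, zero_nsmul, add_left_inj] at h

/- The norm map `N = ∑ w^j` kills `(1 - w)Λ`, which contains `index • y`, and multiplies the
`w`-fixed vector `y` by `d`. -/
theorem AddAut.isOfFinAddOrder_sum_range_nsmul_apply (hd : 0 < d) (hw : d • w = 0)
    (hell : Finite (Λ ⧸ coinvSub w)) (x : Λ) :
    IsOfFinAddOrder (∑ j ∈ range d, (j • w) x) := by
  set y := ∑ j ∈ range d, (j • w) x
  let N : Λ →+ Λ := ∑ j ∈ range d, ((j • w : AddAut Λ) : Λ →+ Λ)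
  have hN : ∀ z, N z = ∑ j ∈ range d, (j • w) z := fun z => by simp [N]
  have hker : coinvSub w ≤ N.ker := by
    refine (AddSubgroup.closure_le _).2 ?_
    rintro _ ⟨z, rfl⟩
    simp only [SetLike.mem_coe, AddMonoidHom.mem_ker, hN, map_sub, sum_sub_distrib,
      ← AddAut.add_apply, ← succ_nsmul, sum_range_succ_nsmul_apply hw, sub_self]
  have hy : w y = y := by
    simp only [y, map_sum, ← AddAut.add_apply, ← succ_nsmul', sum_range_succ_nsmul_apply hw]
  have hfix : ∀ j : ℕ, (j • w) y = y := by
    intro j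
    induction j with
    | zero => rfl
    | succ j ih => rw [succ_nsmul', AddAut.add_apply, ih, hy]
  refine isOfFinAddOrder_iff_nsmul_eq_zero.2 ⟨d * (coinvSub w).index,
    Nat.mul_pos hd (Nat.pos_of_ne_zero (coinvSub w).index_ne_zero_of_finite), ?_⟩
  have := hker ((coinvSub w).nsmul_index_mem y)
  rw [AddMonoidHom.mem_ker, hN] at this
  simpa [map_nsmul, hfix, mul_nsmul'] using this

theorem AddAut.pairing_nsmul_apply_eq {B : Λ →+ Λ →+ ℤ} (hBsymm : ∀ a b, B a b = B b a)
    (hwB : ∀ a b, B (w a) (w b) = B a b) (hw : d • w = 0) {j : ℕ} (hj : j ≤ d) (x y : Λ) :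
    B ((j • w) x) y = B (((d - j) • w) y) x := by
  have hinv : ∀ (n : ℕ) (a b : Λ), B ((n • w) a) ((n • w) b) = B a b := by
    intro n
    induction n with
    | zero => intro a b; rfl
    | succ n ih => intro a b; rw [succ_nsmul, AddAut.add_apply, AddAut.add_apply, ih, hwB]
  rw [← hinv (d - j), ← AddAut.add_apply, ← add_nsmul, Nat.sub_add_cancel hj, hw, hBsymm]
  rfl

end Lattice

theorem epsw_nsmul_apply {k Λ : Type*} [Field k] [AddCommGroup Λ] (d : ℕ) (ζ : k)
    (B : Λ →+ Λ →+ ℤ) (w : AddAut Λ) (j : ℕ) (α β : Λ) :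
    epsw d ζ B w ((j • w) α) β = ∏ i ∈ Ico 1 d, (1 - ζ ^ (-(i : ℤ))) ^ B (((i + j) • w) α) β := by
  simp only [epsw, add_nsmul, AddAut.add_apply]

theorem one_sub_pairing_eq_sum_epsw_general
    (k : Type*) [Field k]
    (d : ℕ) (hd : 0 < d) (ζ : k) (hζ : IsPrimitiveRoot ζ d)
    (Λ : Type*) [AddCommGroup Λ]
    (B : Λ →+ Λ →+ ℤ)
    (hBsymm : ∀ a b : Λ, B a b = B b a)
    (w : AddAut Λ) (hwB : ∀ a b : Λ, B (w a) (w b) = B a b)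
    (hword : addOrderOf w = d)
    (hell : Finite (Λ ⧸ coinvSub w)) :
    ∀ α β : Λ, B α α = 2 → B β β = 2 →
      (∀ j : ℕ, B ((j • w) α) β = 0 ∨ B ((j • w) α) β = 1 ∨ B ((j • w) α) β = -1) →
      1 - ζ ^ (∑ j ∈ Finset.Ico 1 d, (j : ℤ) * B ((j • w) β) α) =
        ∑ j ∈ (Finset.range d).filter (fun j => B ((j • w) α) β = -1),
          epsw d ζ B w ((j • w) α) β := by
  intro α β _ _ hrange
  have hw : d • w = 0 := hword ▸ addOrderOf_nsmul_eq_zero w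
  have horbit : ∑ j ∈ range d, B ((j • w) α) β = 0 := by
    rw [← AddMonoidHom.finsetSum_apply, ← map_sum]
    exact ((B.flip β).isOfFinAddOrder
      (AddAut.isOfFinAddOrder_sum_range_nsmul_apply hd hw hell α)).eq_zero'
  rw [sum_congr rfl fun j hj =>
    by rw [AddAut.pairing_nsmul_apply_eq hBsymm hwB hw (mem_Ico.1 hj).2.le]]
  simp only [epsw_nsmul_apply]
  exact hζ.one_sub_zpow_sum_eq_sum_prod hd hrange
    ((AddAut.periodic_nsmul_apply hw α).comp fun x => B x β) horbit

/-- **Proposition 4.2.** If `α, β ∈ Φ` satisfy `(w^jα, β) ∈ {0, ±1}` for all `j`, then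
`1 − ⟨β,α⟩_w = ∑_{j ∈ I_{α,β}(−1)} ε_w(w^jα, β)`, where
`I_{α,β}(−1) = {j ∈ {0,…,d−1} | (w^jα, β) = −1}` and
`⟨β,α⟩_w = ζ^{∑_{j=1}^{d-1} j·(w^jβ,α)}`. -/
theorem one_sub_pairing_eq_sum_epsw
    (k : Type*) [Field k] [CharZero k]
    (d : ℕ) (hd : 0 < d) (ζ : k) (hζ : IsPrimitiveRoot ζ d)
    (Λ : Type*) [AddCommGroup Λ] [Module.Free ℤ Λ] [Module.Finite ℤ Λ]
    (B : Λ →+ Λ →+ ℤ)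
    (hBsymm : ∀ a b : Λ, B a b = B b a)
    (hBpos : ∀ a : Λ, a ≠ 0 → 0 < B a a)
    (hBgen : AddSubgroup.closure {a : Λ | B a a = 2} = ⊤)
    (w : AddAut Λ) (hwB : ∀ a b : Λ, B (w a) (w b) = B a b)
    (hword : addOrderOf w = d)
    (hell : Finite (Λ ⧸ coinvSub w)) :
    ∀ α β : Λ, B α α = 2 → B β β = 2 →
      (∀ j : ℕ, B ((j • w) α) β = 0 ∨ B ((j • w) α) β = 1 ∨ B ((j • w) α) β = -1) →
      1 - ζ ^ (∑ j ∈ Finset.Ico 1 d, (j : ℤ) * B ((j • w) β) α) =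
        ∑ j ∈ (Finset.range d).filter (fun j => B ((j • w) α) β = -1),
          epsw d ζ B w ((j • w) α) β :=
  one_sub_pairing_eq_sum_epsw_general k d hd ζ hζ Λ B hBsymm w hwB hword hell

end
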